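/- arXiv:1201.3112 — 2 statements merged into one kernel-verified Lean document; each statement's English description precedes it below -/
import Mathlib

section
/- The derivations ∂₁, …, ∂_l of the algebra A(l₁,l₂,l₃;Γ) are F-linearly independent, provided Γ is a nondegenerate additive subgroup of F^{l₂+l₃}. -/
open scoped BigOperators

namespace SDF

variable (F : Type) [Field F] [IsAlgClosed F] [CharZero F]
variable (l₁ l₂ l₃ : ℕ) (Γ : AddSubgroup (Fin (l₂ + l₃) → F))

/-- The semigroup algebra `A(l₁,l₂,l₃;Γ) = F[Γ × ℕ^{l₁+l₂}]`,
with basis `x^α t^i` for `α ∈ Γ`, `i ∈ ℕ^{l₁+l₂}`. -/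
abbrev Alg : Type := AddMonoidAlgebra F (↥Γ × (Fin (l₁ + l₂) →₀ ℕ))

/-- The basis monomial `x^α t^i`. -/
noncomputable def mono (α : Γ) (i : Fin (l₁ + l₂) →₀ ℕ) : Alg F l₁ l₂ l₃ Γ :=
  AddMonoidAlgebra.single (α, i) 1

/-- The `p`-th coordinate of `α ∈ Γ ⊆ F^{l₂+l₃}`, with the convention `α_p = 0` for `p ≤ l₁`. -/
def acoord (p : Fin (l₁ + l₂ + l₃)) (α : Γ) : F :=
  if h : l₁ ≤ (p : ℕ) then (α : Fin (l₂ + l₃) → F) ⟨(p : ℕ) - l₁, by have := p.isLt; omega⟩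
  else 0

/-- The `p`-th coordinate of a general `μ ∈ F^{l₂+l₃}`, with the convention `μ_p = 0` for `p ≤ l₁`. -/
def fcoord (p : Fin (l₁ + l₂ + l₃)) (μ : Fin (l₂ + l₃) → F) : F :=
  if h : l₁ ≤ (p : ℕ) then μ ⟨(p : ℕ) - l₁, by have := p.isLt; omega⟩ else 0

/-- The `p`-th component of `i ∈ ℕ^{l₁+l₂}`, with the convention `i_p = 0` for `p > l₁+l₂`. -/
def icoord (p : Fin (l₁ + l₂ + l₃)) (i : Fin (l₁ + l₂) →₀ ℕ) : ℕ :=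
  if h : (p : ℕ) < l₁ + l₂ then i ⟨(p : ℕ), h⟩ else 0

/-- `i - 1_[p]` (truncated subtraction; only used with coefficient `i_p`). -/
noncomputable def lower (p : Fin (l₁ + l₂ + l₃)) (i : Fin (l₁ + l₂) →₀ ℕ) : Fin (l₁ + l₂) →₀ ℕ :=
  if h : (p : ℕ) < l₁ + l₂ then i - Finsupp.single ⟨(p : ℕ), h⟩ 1 else i

/-- The derivation `∂_p` of `A(l₁,l₂,l₃;Γ)`:
`∂_p(x^α t^i) = α_p x^α t^i + i_p x^α t^{i - 1_[p]}`. -/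
noncomputable def pd (p : Fin (l₁ + l₂ + l₃)) :
    Alg F l₁ l₂ l₃ Γ →ₗ[F] Alg F l₁ l₂ l₃ Γ :=
  (Finsupp.lsum F fun g : ↥Γ × (Fin (l₁ + l₂) →₀ ℕ) =>
    LinearMap.toSpanSingleton F (Alg F l₁ l₂ l₃ Γ)
      (acoord F l₁ l₂ l₃ Γ p g.1 • mono F l₁ l₂ l₃ Γ g.1 g.2
        + (icoord l₁ l₂ l₃ p g.2 : F) • mono F l₁ l₂ l₃ Γ g.1 (lower l₁ l₂ l₃ p g.2)))
    ∘ₗ (AddMonoidAlgebra.coeffLinearEquiv F).toLinearMap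

/-- The Witt algebra `W(l₁,l₂,l₃;Γ) = A·D`; the tuple `u : Wt` represents `Σ_p u_p ∂_p`. -/
abbrev Wt : Type := Fin (l₁ + l₂ + l₃) → Alg F l₁ l₂ l₃ Γ

/-- The Lie bracket of `W(l₁,l₂,l₃;Γ)`:
`[Σ_p u_p ∂_p, Σ_q v_q ∂_q] = Σ_{p,q} (u_p ∂_p(v_q) - v_p ∂_p(u_q)) ∂_q`. -/
noncomputable def wbr (u v : Wt F l₁ l₂ l₃ Γ) : Wt F l₁ l₂ l₃ Γ :=
  fun r => ∑ p, (u p * pd F l₁ l₂ l₃ Γ p (v r) - v p * pd F l₁ l₂ l₃ Γ p (u r))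

/-- `D_{p,q}(u) = ∂_p(u) ∂_q - ∂_q(u) ∂_p`. -/
noncomputable def Dpq (p q : Fin (l₁ + l₂ + l₃)) (u : Alg F l₁ l₂ l₃ Γ) :
    Wt F l₁ l₂ l₃ Γ :=
  Pi.single q (pd F l₁ l₂ l₃ Γ p u) - Pi.single p (pd F l₁ l₂ l₃ Γ q u)

/-- The divergence-free algebra `S(l₁,l₂,l₃;0,Γ) = Span{D_{p,q}(u)}`. -/
noncomputable def Ssub : Submodule F (Wt F l₁ l₂ l₃ Γ) :=
  Submodule.span F {w | ∃ p q u, w = Dpq F l₁ l₂ l₃ Γ p q u}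

/-- `Γ` is nondegenerate: it contains an `F`-basis of `F^{l₂+l₃}`, i.e. it spans. -/
def Nondeg : Prop := Submodule.span F (Γ : Set (Fin (l₂ + l₃) → F)) = ⊤

/-- The divergence `div(Σ_p u_p ∂_p) = Σ_p ∂_p(u_p)`. -/
noncomputable def dvg (w : Wt F l₁ l₂ l₃ Γ) : Alg F l₁ l₂ l₃ Γ :=
  ∑ p, pd F l₁ l₂ l₃ Γ p (w p)

/-- The action of `Σ_p u_p ∂_p ∈ W` on `A_μ` (the space `A` with basis `v_{β,i}` the monomials):
`(u ∂_p) . v = u * (∂_p + μ_p) v`. On basis elements this gives exactly the defining formulas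
of the module `A_μ`. -/
noncomputable def actW (μ : Fin (l₂ + l₃) → F) (X : Wt F l₁ l₂ l₃ Γ) :
    Alg F l₁ l₂ l₃ Γ →ₗ[F] Alg F l₁ l₂ l₃ Γ :=
  ∑ p, (LinearMap.mulLeft F (X p)).comp
    (pd F l₁ l₂ l₃ Γ p + fcoord F l₁ l₂ l₃ p μ • LinearMap.id)

/-- The element `Σ_p a_p ∂_p` of `D ⊆ W`. -/
noncomputable def wD (a : Fin (l₁ + l₂ + l₃) → F) : Wt F l₁ l₂ l₃ Γ :=
  fun p => algebraMap F (Alg F l₁ l₂ l₃ Γ) (a p)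

/-- The element `∂_p ∈ W`. -/
noncomputable def wdelta (p : Fin (l₁ + l₂ + l₃)) : Wt F l₁ l₂ l₃ Γ :=
  Pi.single p 1

/-- `β(∂) = Σ_{p>l₁} a_p β_p` for `∂ = Σ_p a_p ∂_p`. -/
def beval (β : Fin (l₂ + l₃) → F) (a : Fin (l₁ + l₂ + l₃) → F) : F :=
  ∑ p, a p * fcoord F l₁ l₂ l₃ p β

/-! A relation `∑_q g_q ∂_q = 0` applied to `t^{e_p}` gives `g_p = 0` for `p ≤ l₁ + l₂`.
Applied to `x^α` it gives `∑_q g_q α_q = 0` for all `α ∈ Γ`; since `Γ` spans `F^{l₂+l₃}`, the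
functional `μ ↦ ∑_q g_q μ_q` vanishes, so `g_p = 0` for `p > l₁` as well. -/

section

omit [IsAlgClosed F] [CharZero F]

variable {F l₁ l₂ l₃ Γ}

lemma pd_mono (p : Fin (l₁ + l₂ + l₃)) (α : Γ) (i : Fin (l₁ + l₂) →₀ ℕ) :
    pd F l₁ l₂ l₃ Γ p (mono F l₁ l₂ l₃ Γ α i)
      = acoord F l₁ l₂ l₃ Γ p α • mono F l₁ l₂ l₃ Γ α i
        + (icoord l₁ l₂ l₃ p i : F) • mono F l₁ l₂ l₃ Γ α (lower l₁ l₂ l₃ p i) := by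
  simp [pd, mono, AddMonoidAlgebra.coeffLinearEquiv]

lemma mono_ne_zero (α : Γ) (i : Fin (l₁ + l₂) →₀ ℕ) : mono F l₁ l₂ l₃ Γ α i ≠ 0 := by
  simp [mono]

lemma acoord_zero (p : Fin (l₁ + l₂ + l₃)) : acoord F l₁ l₂ l₃ Γ p 0 = 0 := by
  unfold acoord; split_ifs <;> rfl

lemma icoord_zero (p : Fin (l₁ + l₂ + l₃)) : icoord l₁ l₂ l₃ p 0 = 0 := by
  unfold icoord; split_ifs <;> rfl

lemma icoord_single (r p : Fin (l₁ + l₂ + l₃)) (hp : (p : ℕ) < l₁ + l₂) :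
    icoord l₁ l₂ l₃ r (Finsupp.single ⟨p, hp⟩ 1) = if r = p then 1 else 0 := by
  unfold icoord
  split_ifs with hr hrp hrp <;> simp_all [Fin.ext_iff]

lemma fcoord_single (r p : Fin (l₁ + l₂ + l₃)) (hp : l₁ ≤ (p : ℕ)) :
    fcoord F l₁ l₂ l₃ r (Pi.single ⟨p - l₁, by omega⟩ 1) = if r = p then 1 else 0 := by
  unfold fcoord
  split_ifs with hr hrp hrp <;> simp_all [Pi.single_apply, Fin.ext_iff]
  omega

variable (F l₁ l₂ l₃) in
def fcoordₗ (p : Fin (l₁ + l₂ + l₃)) : (Fin (l₂ + l₃) → F) →ₗ[F] F where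
  toFun := fcoord F l₁ l₂ l₃ p
  map_add' μ ν := by unfold fcoord; split_ifs <;> simp
  map_smul' c μ := by unfold fcoord; split_ifs <;> simp

lemma eq_zero_of_sum_smul_pd_of_lt {g : Fin (l₁ + l₂ + l₃) → F}
    (hg : ∑ q, g q • pd F l₁ l₂ l₃ Γ q = 0) {p : Fin (l₁ + l₂ + l₃)} (hp : (p : ℕ) < l₁ + l₂) : g p = 0 := by
  have h := LinearMap.congr_fun hg (mono F l₁ l₂ l₃ Γ 0 (Finsupp.single ⟨p, hp⟩ 1))
  simp only [LinearMap.sum_apply, LinearMap.smul_apply, pd_mono, acoord_zero, icoord_single,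
    zero_smul, zero_add, LinearMap.zero_apply] at h
  rw [Finset.sum_eq_single p (by intro r _ hr; simp [hr]) (by simp)] at h
  simpa [mono_ne_zero] using h

lemma sum_mul_fcoord_eq_zero {g : Fin (l₁ + l₂ + l₃) → F}
    (hg : ∑ q, g q • pd F l₁ l₂ l₃ Γ q = 0) (α : Γ) : ∑ q, g q * fcoord F l₁ l₂ l₃ q α = 0 := by
  have h := LinearMap.congr_fun hg (mono F l₁ l₂ l₃ Γ α 0)
  simp only [LinearMap.sum_apply, LinearMap.smul_apply, pd_mono, icoord_zero, Nat.cast_zero,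
    zero_smul, add_zero, smul_smul, ← Finset.sum_smul, LinearMap.zero_apply] at h
  exact (smul_eq_zero.mp h).resolve_right (mono_ne_zero α 0)

lemma eq_zero_of_sum_smul_pd_of_le (hΓ : Nondeg F l₂ l₃ Γ) {g : Fin (l₁ + l₂ + l₃) → F}
    (hg : ∑ q, g q • pd F l₁ l₂ l₃ Γ q = 0) {p : Fin (l₁ + l₂ + l₃)} (hp : l₁ ≤ (p : ℕ)) :
    g p = 0 := by
  have hker : Submodule.span F (Γ : Set (Fin (l₂ + l₃) → F)) ≤
      LinearMap.ker (∑ q, g q • fcoordₗ F l₁ l₂ l₃ q) :=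
    Submodule.span_le.mpr fun μ hμ => by simpa [fcoordₗ] using sum_mul_fcoord_eq_zero hg ⟨μ, hμ⟩
  rw [hΓ] at hker
  have h := hker (Submodule.mem_top (x := Pi.single ⟨p - l₁, by omega⟩ 1))
  simpa [fcoordₗ, fcoord_single _ _ hp] using h

end

theorem stmt2 (hΓ : Nondeg F l₂ l₃ Γ) :
    LinearIndependent F (fun p : Fin (l₁ + l₂ + l₃) => pd F l₁ l₂ l₃ Γ p) := by
  rw [Fintype.linearIndependent_iff]
  intro g hg p
  rcases lt_or_ge (p : ℕ) (l₁ + l₂) with hp | hp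
  · exact eq_zero_of_sum_smul_pd_of_lt hg hp
  · exact eq_zero_of_sum_smul_pd_of_le hΓ hg (by omega)

end SDF
end

section
/- The formulas D_{p,q}(x^α t^i).v_{β,j} = (α_p(β_q+μ_q) − α_q(β_p+μ_p)) v_{β+α, i+j} + (j_q α_p − i_q(β_p+μ_p)) v_{β+α, i+j−1_[q]} + (i_p(β_q+μ_q) − j_p α_q) v_{β+α, i+j−1_[p]} + (i_p j_q − i_q j_p) v_{β+α, i+j−1_[p]−1_[q]} define a module structure A_μ over the Lie algebra S(l₁,l₂,l₃;0,Γ) on the vector space with basis {v_{α,i} : α ∈ Γ, i ∈ ℕ^{l₁+l₂}}, i.e., the bracket relation [X,Y].v = X.(Y.v) − Y.(X.v) holds for all X, Y ∈ S(l₁,l₂,l₃;0,Γ). -/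
open scoped BigOperators

namespace SDF

variable (F : Type) [Field F] [IsAlgClosed F] [CharZero F]
variable (l₁ l₂ l₃ : ℕ) (Γ : AddSubgroup (Fin (l₂ + l₃) → F))

/-! The formulas are those of the operators `ρ(Σ_p u_p ∂_p) = Σ_p u_p (∂_p + μ_p)` on `A`
(with `v_{β,j} = x^β t^j`), which make sense on all of `W`. Since the `∂_p` are commuting
derivations, the operators `∇_p = ∂_p + μ_p` commute pairwise and `[∇_p, u] = ∂_p(u)` for
`u ∈ A`. Expanding `ρ(X) ρ(Y) - ρ(Y) ρ(X)`, the second-order terms `X_p Y_q ∇_p ∇_q` cancel by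
symmetry and the first-order ones add up to `ρ([X, Y])`. The formula for `D_{p,q}(x^α t^i)` is
`∂_p(x^α t^i) ∇_q(x^β t^j) - ∂_q(x^α t^i) ∇_p(x^β t^j)` multiplied out. -/

section VectorFields

variable {R A ι : Type*} [CommSemiring R] [CommRing A] [Algebra R A] [Fintype ι]

def vectorFieldAction (nabla : ι → Module.End R A) : (ι → A) →ₗ[R] Module.End R A :=
  ∑ p, LinearMap.mulRight R (nabla p) ∘ₗ (Algebra.lmul R A).toLinearMap ∘ₗ LinearMap.proj p

variable {nabla : ι → Module.End R A}

lemma vectorFieldAction_apply (X : ι → A) :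
    vectorFieldAction nabla X = ∑ p, Algebra.lmul R A (X p) * nabla p := by
  simp [vectorFieldAction]

lemma vectorFieldAction_single [DecidableEq ι] (q : ι) (a : A) :
    vectorFieldAction nabla (Pi.single q a) = Algebra.lmul R A a * nabla q := by
  rw [vectorFieldAction_apply, Finset.sum_eq_single q (fun p _ hp => by simp [hp]) (by simp),
    Pi.single_eq_same]

lemma vectorFieldAction_mul {δ : ι → A → A}
    (hδ : ∀ p a, nabla p * Algebra.lmul R A a =
      Algebra.lmul R A a * nabla p + Algebra.lmul R A (δ p a))
    (X Y : ι → A) :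
    vectorFieldAction nabla X * vectorFieldAction nabla Y =
      ∑ p, ∑ q, (Algebra.lmul R A (X p * Y q) * (nabla p * nabla q)
        + Algebra.lmul R A (X p * δ p (Y q)) * nabla q) := by
  rw [vectorFieldAction_apply, vectorFieldAction_apply, Finset.sum_mul_sum]
  refine Finset.sum_congr rfl fun p _ => Finset.sum_congr rfl fun q _ => ?_
  rw [mul_assoc, ← mul_assoc (nabla p), hδ, map_mul, map_mul]
  noncomm_ring

theorem vectorFieldAction_lie {δ : ι → A → A} (hcomm : ∀ p q, Commute (nabla p) (nabla q))
    (hδ : ∀ p a, nabla p * Algebra.lmul R A a =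
      Algebra.lmul R A a * nabla p + Algebra.lmul R A (δ p a))
    (X Y : ι → A) :
    vectorFieldAction nabla (fun r => ∑ p, (X p * δ p (Y r) - Y p * δ p (X r))) =
      vectorFieldAction nabla X * vectorFieldAction nabla Y
        - vectorFieldAction nabla Y * vectorFieldAction nabla X := by
  have hsymm : ∑ p, ∑ q, Algebra.lmul R A (X p * Y q) * (nabla p * nabla q) =
      ∑ p, ∑ q, Algebra.lmul R A (Y p * X q) * (nabla p * nabla q) := by
    rw [Finset.sum_comm]
    refine Finset.sum_congr rfl fun p _ => Finset.sum_congr rfl fun q _ => ?_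
    rw [mul_comm, (hcomm q p).eq]
  rw [vectorFieldAction_mul hδ, vectorFieldAction_mul hδ, vectorFieldAction_apply]
  simp only [Finset.sum_add_distrib, hsymm, add_sub_add_left_eq_sub, ← Finset.sum_sub_distrib,
    map_sum, map_sub, sub_mul, Finset.sum_mul]
  exact Finset.sum_comm

theorem mul_lmul_of_leibniz {d : A →ₗ[R] A} (hd : ∀ a b, d (a * b) = d a * b + a * d b)
    (c : R) (a : A) :
    (d + c • 1) * Algebra.lmul R A a =
      Algebra.lmul R A a * (d + c • 1) + Algebra.lmul R A (d a) := by
  ext b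
  simp only [Algebra.coe_lmul_eq_mul, Module.End.mul_apply, LinearMap.mul_apply_apply,
    LinearMap.add_apply, LinearMap.smul_apply, Module.End.one_apply, hd]
  rw [mul_add, mul_smul_comm]
  abel

end VectorFields

theorem _root_.AddMonoidAlgebra.leibniz_of_single {k G : Type*} [CommSemiring k] [AddMonoid G]
    {d : AddMonoidAlgebra k G →ₗ[k] AddMonoidAlgebra k G}
    (h : ∀ g g' : G, d (AddMonoidAlgebra.single g 1 * AddMonoidAlgebra.single g' 1) =
      d (AddMonoidAlgebra.single g 1) * AddMonoidAlgebra.single g' 1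
        + AddMonoidAlgebra.single g 1 * d (AddMonoidAlgebra.single g' 1))
    (a b : AddMonoidAlgebra k G) : d (a * b) = d a * b + a * d b := by
  induction a using AddMonoidAlgebra.induction_linear with
  | zero => simp
  | add a a' ha ha' => simp only [add_mul, map_add, ha, ha']; abel
  | single g c =>
    induction b using AddMonoidAlgebra.induction_linear with
    | zero => simp
    | add b b' hb hb' => simp only [mul_add, map_add, hb, hb']; abel
    | single g' c' =>
      rw [← mul_one c, ← mul_one c', ← AddMonoidAlgebra.smul_single',
        ← AddMonoidAlgebra.smul_single', smul_mul_smul_comm, map_smul, map_smul, map_smul, h,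
        smul_add, smul_mul_smul_comm, smul_mul_smul_comm]

section Monomials

omit [IsAlgClosed F] [CharZero F]

variable {F l₁ l₂ l₃ Γ}

lemma mono_mul (α β : Γ) (i j : Fin (l₁ + l₂) →₀ ℕ) :
    mono F l₁ l₂ l₃ Γ α i * mono F l₁ l₂ l₃ Γ β j = mono F l₁ l₂ l₃ Γ (α + β) (i + j) := by
  simp [mono, AddMonoidAlgebra.single_mul_single]

lemma acoord_add (p : Fin (l₁ + l₂ + l₃)) (α β : Γ) :
    acoord F l₁ l₂ l₃ Γ p (α + β) = acoord F l₁ l₂ l₃ Γ p α + acoord F l₁ l₂ l₃ Γ p β := by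
  unfold acoord; split <;> simp

lemma icoord_add (p : Fin (l₁ + l₂ + l₃)) (i j : Fin (l₁ + l₂) →₀ ℕ) :
    icoord l₁ l₂ l₃ p (i + j) = icoord l₁ l₂ l₃ p i + icoord l₁ l₂ l₃ p j := by
  unfold icoord; split <;> simp

lemma lower_add (p : Fin (l₁ + l₂ + l₃)) {i : Fin (l₁ + l₂) →₀ ℕ} (h : icoord l₁ l₂ l₃ p i ≠ 0)
    (j : Fin (l₁ + l₂) →₀ ℕ) :
    lower l₁ l₂ l₃ p i + j = lower l₁ l₂ l₃ p (i + j) := by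
  unfold icoord at h
  unfold lower
  split_ifs at h ⊢
  · rw [tsub_add_eq_add_tsub (Finsupp.single_le_iff.2 (Nat.one_le_iff_ne_zero.2 h))]
  · rfl

lemma lower_comm (p q : Fin (l₁ + l₂ + l₃)) (i : Fin (l₁ + l₂) →₀ ℕ) :
    lower l₁ l₂ l₃ p (lower l₁ l₂ l₃ q i) = lower l₁ l₂ l₃ q (lower l₁ l₂ l₃ p i) := by
  unfold lower
  split_ifs <;> simp only [tsub_tsub, add_comm]

lemma icoord_lower_of_ne {p q : Fin (l₁ + l₂ + l₃)} (hpq : p ≠ q) (i : Fin (l₁ + l₂) →₀ ℕ) :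
    icoord l₁ l₂ l₃ p (lower l₁ l₂ l₃ q i) = icoord l₁ l₂ l₃ p i := by
  unfold icoord lower
  split_ifs
  · rw [Finsupp.tsub_apply, Finsupp.single_eq_of_ne (by simpa [Fin.ext_iff] using hpq),
      tsub_zero]
  · rfl
  · rfl

lemma add_lower (p : Fin (l₁ + l₂ + l₃)) (i : Fin (l₁ + l₂) →₀ ℕ) {j : Fin (l₁ + l₂) →₀ ℕ}
    (h : icoord l₁ l₂ l₃ p j ≠ 0) :
    i + lower l₁ l₂ l₃ p j = lower l₁ l₂ l₃ p (i + j) := by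
  rw [add_comm i, lower_add p h, add_comm j]

lemma smul_mono_add_lower_mul (a b : F) (p q : Fin (l₁ + l₂ + l₃)) (α β : Γ)
    (i j : Fin (l₁ + l₂) →₀ ℕ) :
    (a • mono F l₁ l₂ l₃ Γ α i
        + (icoord l₁ l₂ l₃ p i : F) • mono F l₁ l₂ l₃ Γ α (lower l₁ l₂ l₃ p i))
      * (b • mono F l₁ l₂ l₃ Γ β j
        + (icoord l₁ l₂ l₃ q j : F) • mono F l₁ l₂ l₃ Γ β (lower l₁ l₂ l₃ q j)) =
      (a * b) • mono F l₁ l₂ l₃ Γ (α + β) (i + j)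
        + (a * icoord l₁ l₂ l₃ q j) • mono F l₁ l₂ l₃ Γ (α + β) (lower l₁ l₂ l₃ q (i + j))
        + (icoord l₁ l₂ l₃ p i * b) • mono F l₁ l₂ l₃ Γ (α + β) (lower l₁ l₂ l₃ p (i + j))
        + (icoord l₁ l₂ l₃ p i * icoord l₁ l₂ l₃ q j : F) •
            mono F l₁ l₂ l₃ Γ (α + β) (lower l₁ l₂ l₃ p (lower l₁ l₂ l₃ q (i + j))) := by
  rcases eq_or_ne (icoord l₁ l₂ l₃ p i) 0 with hi | hi <;>
  rcases eq_or_ne (icoord l₁ l₂ l₃ q j) 0 with hj | hj <;>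
  simp [add_mul, mul_add, mono_mul, hi, hj, lower_add, add_lower, lower_comm q p] <;>
  module

lemma pd_mul (p : Fin (l₁ + l₂ + l₃)) (a b : Alg F l₁ l₂ l₃ Γ) :
    pd F l₁ l₂ l₃ Γ p (a * b) = pd F l₁ l₂ l₃ Γ p a * b + a * pd F l₁ l₂ l₃ Γ p b := by
  refine AddMonoidAlgebra.leibniz_of_single (fun ⟨α, i⟩ ⟨β, j⟩ => ?_) a b
  change pd F l₁ l₂ l₃ Γ p (mono F l₁ l₂ l₃ Γ α i * mono F l₁ l₂ l₃ Γ β j) =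
    pd F l₁ l₂ l₃ Γ p (mono F l₁ l₂ l₃ Γ α i) * mono F l₁ l₂ l₃ Γ β j
      + mono F l₁ l₂ l₃ Γ α i * pd F l₁ l₂ l₃ Γ p (mono F l₁ l₂ l₃ Γ β j)
  rw [mono_mul, pd_mono, pd_mono, pd_mono, acoord_add, icoord_add]
  rcases eq_or_ne (icoord l₁ l₂ l₃ p i) 0 with hi | hi <;>
  rcases eq_or_ne (icoord l₁ l₂ l₃ p j) 0 with hj | hj <;>
  simp [add_mul, mul_add, mono_mul, hi, hj, lower_add, add_lower] <;>
  module

lemma pd_commute (p q : Fin (l₁ + l₂ + l₃)) :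
    Commute (pd F l₁ l₂ l₃ Γ p) (pd F l₁ l₂ l₃ Γ q) := by
  rcases eq_or_ne p q with rfl | hpq
  · exact Commute.refl _
  refine AddMonoidAlgebra.lhom_ext' fun ⟨α, i⟩ => LinearMap.ext_ring ?_
  change pd F l₁ l₂ l₃ Γ p (pd F l₁ l₂ l₃ Γ q (mono F l₁ l₂ l₃ Γ α i)) =
    pd F l₁ l₂ l₃ Γ q (pd F l₁ l₂ l₃ Γ p (mono F l₁ l₂ l₃ Γ α i))
  simp only [pd_mono, map_add, map_smul, icoord_lower_of_ne hpq, icoord_lower_of_ne hpq.symm,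
    lower_comm p q]
  module

end Monomials

section Representation

omit [IsAlgClosed F] [CharZero F]

variable {F l₁ l₂ l₃ Γ}

noncomputable def shiftedPd (μ : Fin (l₂ + l₃) → F) (p : Fin (l₁ + l₂ + l₃)) :
    Module.End F (Alg F l₁ l₂ l₃ Γ) :=
  pd F l₁ l₂ l₃ Γ p + fcoord F l₁ l₂ l₃ p μ • 1

variable (μ : Fin (l₂ + l₃) → F)

lemma shiftedPd_mono (p : Fin (l₁ + l₂ + l₃)) (β : Γ) (j : Fin (l₁ + l₂) →₀ ℕ) :
    shiftedPd μ p (mono F l₁ l₂ l₃ Γ β j) =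
      (acoord F l₁ l₂ l₃ Γ p β + fcoord F l₁ l₂ l₃ p μ) • mono F l₁ l₂ l₃ Γ β j
        + (icoord l₁ l₂ l₃ p j : F) • mono F l₁ l₂ l₃ Γ β (lower l₁ l₂ l₃ p j) := by
  simp only [shiftedPd, LinearMap.add_apply, LinearMap.smul_apply, Module.End.one_apply, pd_mono]
  module

lemma shiftedPd_commute (p q : Fin (l₁ + l₂ + l₃)) :
    Commute (shiftedPd (Γ := Γ) μ p) (shiftedPd μ q) :=
  ((pd_commute p q).add_right ((Commute.one_right _).smul_right _)).add_left
    ((Commute.one_left _).smul_left _)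

lemma shiftedPd_mul_lmul (p : Fin (l₁ + l₂ + l₃)) (a : Alg F l₁ l₂ l₃ Γ) :
    shiftedPd μ p * Algebra.lmul F _ a =
      Algebra.lmul F _ a * shiftedPd μ p + Algebra.lmul F _ (pd F l₁ l₂ l₃ Γ p a) :=
  mul_lmul_of_leibniz (pd_mul p) _ a

lemma vectorFieldAction_Dpq_mono (p q : Fin (l₁ + l₂ + l₃)) (α β : Γ)
    (i j : Fin (l₁ + l₂) →₀ ℕ) :
    vectorFieldAction (shiftedPd μ) (Dpq F l₁ l₂ l₃ Γ p q (mono F l₁ l₂ l₃ Γ α i))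
        (mono F l₁ l₂ l₃ Γ β j) =
          (acoord F l₁ l₂ l₃ Γ p α * (acoord F l₁ l₂ l₃ Γ q β + fcoord F l₁ l₂ l₃ q μ)
              - acoord F l₁ l₂ l₃ Γ q α *
                  (acoord F l₁ l₂ l₃ Γ p β + fcoord F l₁ l₂ l₃ p μ)) •
            mono F l₁ l₂ l₃ Γ (β + α) (i + j)
          + ((icoord l₁ l₂ l₃ q j : F) * acoord F l₁ l₂ l₃ Γ p α
              - (icoord l₁ l₂ l₃ q i : F) *
                  (acoord F l₁ l₂ l₃ Γ p β + fcoord F l₁ l₂ l₃ p μ)) •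
            mono F l₁ l₂ l₃ Γ (β + α) (lower l₁ l₂ l₃ q (i + j))
          + ((icoord l₁ l₂ l₃ p i : F) *
                  (acoord F l₁ l₂ l₃ Γ q β + fcoord F l₁ l₂ l₃ q μ)
              - (icoord l₁ l₂ l₃ p j : F) * acoord F l₁ l₂ l₃ Γ q α) •
            mono F l₁ l₂ l₃ Γ (β + α) (lower l₁ l₂ l₃ p (i + j))
          + ((icoord l₁ l₂ l₃ p i * icoord l₁ l₂ l₃ q j : F)
              - (icoord l₁ l₂ l₃ q i * icoord l₁ l₂ l₃ p j : F)) •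
            mono F l₁ l₂ l₃ Γ (β + α) (lower l₁ l₂ l₃ p (lower l₁ l₂ l₃ q (i + j))) := by
  rw [Dpq, map_sub, vectorFieldAction_single, vectorFieldAction_single, LinearMap.sub_apply,
    Module.End.mul_apply, Module.End.mul_apply, Algebra.coe_lmul_eq_mul, LinearMap.mul_apply',
    LinearMap.mul_apply', shiftedPd_mono, shiftedPd_mono, pd_mono, pd_mono,
    smul_mono_add_lower_mul, smul_mono_add_lower_mul, lower_comm q p, add_comm α β]
  module

end Representation

theorem stmt8 (μ : Fin (l₂ + l₃) → F) :
    ∃ ρ : ↥(Ssub F l₁ l₂ l₃ Γ) →ₗ[F] (Alg F l₁ l₂ l₃ Γ →ₗ[F] Alg F l₁ l₂ l₃ Γ),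
      (∀ (p q : Fin (l₁ + l₂ + l₃)) (α β : Γ) (i j : Fin (l₁ + l₂) →₀ ℕ)
          (h : Dpq F l₁ l₂ l₃ Γ p q (mono F l₁ l₂ l₃ Γ α i) ∈ Ssub F l₁ l₂ l₃ Γ), p ≠ q →
        ρ ⟨Dpq F l₁ l₂ l₃ Γ p q (mono F l₁ l₂ l₃ Γ α i), h⟩ (mono F l₁ l₂ l₃ Γ β j) =
          (acoord F l₁ l₂ l₃ Γ p α * (acoord F l₁ l₂ l₃ Γ q β + fcoord F l₁ l₂ l₃ q μ)
              - acoord F l₁ l₂ l₃ Γ q α *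
                  (acoord F l₁ l₂ l₃ Γ p β + fcoord F l₁ l₂ l₃ p μ)) •
            mono F l₁ l₂ l₃ Γ (β + α) (i + j)
          + ((icoord l₁ l₂ l₃ q j : F) * acoord F l₁ l₂ l₃ Γ p α
              - (icoord l₁ l₂ l₃ q i : F) *
                  (acoord F l₁ l₂ l₃ Γ p β + fcoord F l₁ l₂ l₃ p μ)) •
            mono F l₁ l₂ l₃ Γ (β + α) (lower l₁ l₂ l₃ q (i + j))
          + ((icoord l₁ l₂ l₃ p i : F) *
                  (acoord F l₁ l₂ l₃ Γ q β + fcoord F l₁ l₂ l₃ q μ)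
              - (icoord l₁ l₂ l₃ p j : F) * acoord F l₁ l₂ l₃ Γ q α) •
            mono F l₁ l₂ l₃ Γ (β + α) (lower l₁ l₂ l₃ p (i + j))
          + ((icoord l₁ l₂ l₃ p i * icoord l₁ l₂ l₃ q j : F)
              - (icoord l₁ l₂ l₃ q i * icoord l₁ l₂ l₃ p j : F)) •
            mono F l₁ l₂ l₃ Γ (β + α) (lower l₁ l₂ l₃ p (lower l₁ l₂ l₃ q (i + j)))) ∧
      (∀ (X Y : Wt F l₁ l₂ l₃ Γ) (hX : X ∈ Ssub F l₁ l₂ l₃ Γ) (hY : Y ∈ Ssub F l₁ l₂ l₃ Γ)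
          (hXY : wbr F l₁ l₂ l₃ Γ X Y ∈ Ssub F l₁ l₂ l₃ Γ),
        ρ ⟨wbr F l₁ l₂ l₃ Γ X Y, hXY⟩ =
          ρ ⟨X, hX⟩ ∘ₗ ρ ⟨Y, hY⟩ - ρ ⟨Y, hY⟩ ∘ₗ ρ ⟨X, hX⟩) := by
  refine ⟨vectorFieldAction (shiftedPd μ) ∘ₗ (Ssub F l₁ l₂ l₃ Γ).subtype,
    fun p q α β i j _ _ => vectorFieldAction_Dpq_mono μ p q α β i j,
    fun X Y _ _ _ => vectorFieldAction_lie (shiftedPd_commute μ) (shiftedPd_mul_lmul μ) X Y⟩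

end SDF
end
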